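/- Rank bound in Proposition 2: let P ≥ 1 and let ω₁,…,ω_P ∈ ℂ satisfy S + ω_p·D_{n'} ≠ 0 for all p and all n' ∈ Fin N. Form the N²×P matrix Ā whose p-th column is the concatenation over n' ∈ Fin N of the blocks v^{(n')}(ω_p) (with v^{(n')}(ω)_i = (S + ω·D_i)/(S + ω·D_{n'}) − Y_i/Y_{n'}), and form the vectors d1(0) and d2(0,0) in ℂ^{N²} as the concatenations over n' of the blocks with entries (D_{n'} − D_i)/Y_{n'}² and 2(D_i − D_{n'})/Y_{n'}³, respectively. Then every column of Ā, as well as d1(0) and d2(0,0), lies in the subspace V ⊆ ℂ^{N²} of vectors whose n'-th block is a complex multiple of u_{n'} = (D_{n'} − D_i)_{i ∈ Fin N}; since dim V ≤ N, the rank of the augmented matrix [Ā, d1(0), d2(0,0)] is at most N. -/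

import Mathlib

/-- Entry `i` of the D-CSIR block `v^{(n')}(ω)`. -/
noncomputable def vblock {N : ℕ} (S : ℂ) (D : Fin N → ℂ) (ω : ℂ) (n' i : Fin N) : ℂ :=
  (S + ω * D i) / (S + ω * D n') - (S + D i) / (S + D n')

/-- The `N² × P` matrix `Ā` whose `p`-th column concatenates the blocks `v^{(n')}(ω_p)`. -/
noncomputable def AbarMat {N P : ℕ} (S : ℂ) (D : Fin N → ℂ) (ω : Fin P → ℂ) :
    Matrix (Fin N × Fin N) (Fin P) ℂ :=
  fun r p => vblock S D (ω p) r.1 r.2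

/-- First-order AoA basis vector at `φ = 0`, with entries `(D_{n'} − D_i)/Y_{n'}²`. -/
noncomputable def d1vec {N : ℕ} (S : ℂ) (D : Fin N → ℂ) : Fin N × Fin N → ℂ :=
  fun r => (D r.1 - D r.2) / (S + D r.1) ^ 2

/-- Second-order AoA basis vector at `φ = 0`, with entries `2(D_i − D_{n'})/Y_{n'}³`. -/
noncomputable def d2vec {N : ℕ} (S : ℂ) (D : Fin N → ℂ) : Fin N × Fin N → ℂ :=
  fun r => 2 * (D r.2 - D r.1) / (S + D r.1) ^ 3

/-- The augmented matrix `[Ā, d1(0), d2(0,0)]`. -/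
noncomputable def augMat {N P : ℕ} (S : ℂ) (D : Fin N → ℂ) (ω : Fin P → ℂ) :
    Matrix (Fin N × Fin N) (Fin P ⊕ Fin 2) ℂ :=
  fun r c =>
    Sum.elim (fun p => AbarMat S D ω r p)
      (fun j => if j = 0 then d1vec S D r else d2vec S D r) c


/-- Such a matrix factors as `diagonal u * C.submatrix f id`. -/
theorem Matrix.rank_le_card_of_eq_mul_row {m n k R : Type*} [Fintype m] [Fintype n] [Fintype k]
    [DecidableEq m] [CommSemiring R] [StrongRankCondition R]
    (M : Matrix m n R) (C : Matrix k n R) (f : m → k) (u : m → R)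
    (h : ∀ r c, M r c = C (f r) c * u r) : M.rank ≤ Fintype.card k := by
  have hM : M = Matrix.diagonal u * C.submatrix f id := by
    ext r c
    rw [Matrix.diagonal_mul, h, Matrix.submatrix_apply, id, mul_comm]
  calc M.rank ≤ (C.submatrix f id).rank := hM ▸ Matrix.rank_mul_le_right _ _
    _ ≤ C.rank := Matrix.rank_submatrix_le _ _ _
    _ ≤ Fintype.card k := Matrix.rank_le_card_height C

section

variable {N : ℕ} (S : ℂ) (D : Fin N → ℂ)

/-- The coefficient of `u_{n'} = (D_{n'} - D_i)_i` in the block `v^{(n')}(ω)`. -/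
noncomputable def vblockCoeff (ω : ℂ) (n' : Fin N) : ℂ :=
  S * (1 - ω) / ((S + ω * D n') * (S + D n'))

theorem vblock_eq_coeff_mul {ω : ℂ} {n' : Fin N} (hω : S + ω * D n' ≠ 0)
    (hY : S + D n' ≠ 0) (i : Fin N) :
    vblock S D ω n' i = vblockCoeff S D ω n' * (D n' - D i) := by
  unfold vblock vblockCoeff
  field_simp
  ring

theorem d1vec_eq_mul (n' i : Fin N) :
    d1vec S D (n', i) = ((S + D n') ^ 2)⁻¹ * (D n' - D i) := by
  rw [d1vec, div_eq_inv_mul]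

theorem d2vec_eq_mul (n' i : Fin N) :
    d2vec S D (n', i) = -2 * ((S + D n') ^ 3)⁻¹ * (D n' - D i) := by
  rw [d2vec, div_eq_mul_inv]
  ring

noncomputable def augCoeff {P : ℕ} (ω : Fin P → ℂ) : Matrix (Fin N) (Fin P ⊕ Fin 2) ℂ :=
  fun n' c => Sum.elim (fun p => vblockCoeff S D (ω p) n')
    (fun j => if j = 0 then ((S + D n') ^ 2)⁻¹ else -2 * ((S + D n') ^ 3)⁻¹) c

theorem augMat_eq_coeff_mul {P : ℕ} {ω : Fin P → ℂ} (hY : ∀ i, S + D i ≠ 0)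
    (hω : ∀ p n', S + ω p * D n' ≠ 0) (n' i : Fin N) (c : Fin P ⊕ Fin 2) :
    augMat S D ω (n', i) c = augCoeff S D ω n' c * (D n' - D i) := by
  rcases c with p | j
  · exact vblock_eq_coeff_mul S D (hω p n') (hY n') i
  · by_cases hj : j = 0
    · simp only [augMat, augCoeff, Sum.elim_inr, if_pos hj, d1vec_eq_mul]
    · simp only [augMat, augCoeff, Sum.elim_inr, if_neg hj, d2vec_eq_mul]

end

theorem aoa_manifold_rank_bound_general
    (N : ℕ) (S : ℂ) (D : Fin N → ℂ)
    (hY : ∀ i, S + D i ≠ 0)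
    (P : ℕ) (ω : Fin P → ℂ)
    (hω : ∀ p n', S + ω p * D n' ≠ 0) :
    (∀ p, ∃ a : Fin N → ℂ, ∀ n' i,
      AbarMat S D ω (n', i) p = a n' * (D n' - D i)) ∧
    (∃ a : Fin N → ℂ, ∀ n' i, d1vec S D (n', i) = a n' * (D n' - D i)) ∧
    (∃ a : Fin N → ℂ, ∀ n' i, d2vec S D (n', i) = a n' * (D n' - D i)) ∧
    (augMat S D ω).rank ≤ N := by
  refine ⟨fun p => ⟨_, fun n' i => vblock_eq_coeff_mul S D (hω p n') (hY n') i⟩,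
    ⟨_, d1vec_eq_mul S D⟩, ⟨_, d2vec_eq_mul S D⟩, ?_⟩
  simpa using Matrix.rank_le_card_of_eq_mul_row (augMat S D ω) (augCoeff S D ω) Prod.fst
    (fun r => D r.1 - D r.2) fun r => augMat_eq_coeff_mul S D hY hω r.1 r.2

/-- Rank bound in Proposition 2: every column of `Ā`, as well as `d1(0)` and
`d2(0,0)`, lies in the subspace of vectors whose `n'`-th block is a multiple of
`u_{n'} = (D_{n'} − D_i)_i`; consequently the rank of the augmented matrix
`[Ā, d1(0), d2(0,0)]` is at most `N`. -/
theorem aoa_manifold_rank_bound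
    (N : ℕ) (hN : 1 ≤ N) (S : ℂ) (D : Fin N → ℂ)
    (hY : ∀ i, S + D i ≠ 0)
    (P : ℕ) (hP : 1 ≤ P) (ω : Fin P → ℂ)
    (hω : ∀ p n', S + ω p * D n' ≠ 0) :
    (∀ p, ∃ a : Fin N → ℂ, ∀ n' i,
      AbarMat S D ω (n', i) p = a n' * (D n' - D i)) ∧
    (∃ a : Fin N → ℂ, ∀ n' i, d1vec S D (n', i) = a n' * (D n' - D i)) ∧
    (∃ a : Fin N → ℂ, ∀ n' i, d2vec S D (n', i) = a n' * (D n' - D i)) ∧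
    (augMat S D ω).rank ≤ N :=
  aoa_manifold_rank_bound_general N S D hY P ω hω
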